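/- Let X and F be r×r real matrices with r ≥ 1, X invertible and F non-nilpotent, and let ρ(F) be the spectral radius of F. Then lim sup_{n→∞} ( log‖X·F^n‖₁ − n·log ρ(F) ) / log n = s(F), where ‖N‖₁ denotes the sum of the absolute values of all entries of a matrix N, and s(F) is the polynomial growth rate of F, namely k − 1 where k is the maximum, over all complex eigenvalues λ of F with |λ| = ρ(F), of the least positive integer j such that ker((F − λ·I)^j) = ker((F − λ·I)^{j+1}) (kernels taken for F regarded as a complex matrix). -/

import Mathlib

/-!
Let `f` be `F` acting on `ℂ^r`. If `(f - μ)^t v = 0`, the binomial expansion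
`f^n v = ∑_{m<t} C(n,m) μ^(n-m) (f - μ)^m v` gives `‖f^n v‖ = O(n^(t-1) |μ|^n)`, and when
`(f - μ)^(t-1) v ≠ 0` the top term dominates, so this is sharp. Splitting `ℂ^r` into
generalized eigenspaces, eigenvalues with `|μ| < ρ` contribute `o(ρ^n)`, while on the circle
`|μ| = ρ` the generalized eigenspaces are killed by `(f - μ)^k`, and the eigenvalue realizing
`k` carries a vector of exact order `n^(k-1) ρ^n`. Hence `‖F^n‖₁ ≍ n^(k-1) ρ^n`;
multiplying by the invertible `X` only changes `‖·‖₁` by bounded factors, and finally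
`log ‖X F^n‖₁ - n log ρ = (k-1) log n + O(1)`.
-/

/-- The spectral radius of a square real matrix: the maximal absolute value of
the roots in `ℂ` of its characteristic polynomial. -/
noncomputable def specRadM {r : ℕ} (M : Matrix (Fin r) (Fin r) ℝ) : ℝ :=
  ((((M.charpoly.map (algebraMap ℝ ℂ)).roots.map fun z => ‖z‖₊).sup : NNReal) : ℝ)

open Filter Asymptotics Topology Module

namespace Module.End

section Algebra

variable {R M : Type*} [CommRing R] [AddCommGroup M] [Module R M]

theorem pow_apply_eq_sum_choose_smul (f : End R M) (μ : R) {v : M} {t n : ℕ}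
    (hv : ((f - μ • 1) ^ t) v = 0) (htn : t ≤ n) :
    (f ^ n) v =
      ∑ m ∈ Finset.range t, ((n.choose m : R) * μ ^ (n - m)) • ((f - μ • 1) ^ m) v := by
  have hcomm : Commute (f - μ • 1) (μ • 1) := (Commute.one_right _).smul_right μ
  have hvanish : ∀ m, t ≤ m → ((f - μ • 1) ^ m) v = 0 := fun m hm => by
    rw [← Nat.sub_add_cancel hm, pow_add, mul_apply, hv, map_zero]
  calc (f ^ n) v = ((f - μ • 1 + μ • 1) ^ n) v := by rw [sub_add_cancel]
    _ = ∑ m ∈ Finset.range (n + 1),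
          ((n.choose m : R) * μ ^ (n - m)) • ((f - μ • 1) ^ m) v := by
      rw [hcomm.add_pow, LinearMap.sum_apply]
      refine Finset.sum_congr rfl fun m _ => ?_
      simp only [smul_pow, one_pow, mul_apply, mul_smul, LinearMap.smul_apply, one_apply,
        Module.End.natCast_apply, map_smul, ← Nat.cast_smul_eq_nsmul R]
    _ = _ := (Finset.sum_subset (Finset.range_subset_range.2 (by omega))
          fun m _ hm => by simp [hvanish m (by simpa using hm)]).symm

theorem ker_pow_mono (g : End R M) : Monotone fun i : ℕ => LinearMap.ker (g ^ i) := by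
  intro i j hij
  obtain ⟨d, rfl⟩ := Nat.exists_eq_add_of_le hij
  show LinearMap.ker (g ^ i) ≤ LinearMap.ker (g ^ (i + d))
  rw [add_comm, pow_add]
  exact LinearMap.ker_le_ker_comp _ _

theorem hasEigenvalue_of_mem_maxGenEigenspace {f : End R M} {μ : R} {v : M}
    (hv : v ∈ f.maxGenEigenspace μ) (hv0 : v ≠ 0) : f.HasEigenvalue μ :=
  HasUnifEigenvalue.lt zero_lt_one (k := ⊤) fun h => hv0 (by simpa [h] using hv)

end Algebra

section VectorSpace

variable {K V : Type*} [Field K] [AddCommGroup V] [Module K V]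

theorem ker_pow_le_ker_pow_of_ker_pow_eq_ker_pow_succ {g : End K V} {j k : ℕ}
    (hj : LinearMap.ker (g ^ j) = LinearMap.ker (g ^ (j + 1))) (hjk : j ≤ k) (N : ℕ) :
    LinearMap.ker (g ^ N) ≤ LinearMap.ker (g ^ k) :=
  calc LinearMap.ker (g ^ N) ≤ LinearMap.ker (g ^ (j + N)) := ker_pow_mono g (Nat.le_add_left N j)
    _ = LinearMap.ker (g ^ j) := (ker_pow_constant hj N).symm
    _ ≤ LinearMap.ker (g ^ k) := ker_pow_mono g hjk

theorem exists_isLeast_ker_pow_eq_ker_pow_succ [FiniteDimensional K V] (g : End K V) :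
    ∃ j, IsLeast {i | 0 < i ∧ LinearMap.ker (g ^ i) = LinearMap.ker (g ^ (i + 1))} j :=
  ⟨_, isLeast_csInf ⟨finrank K V + 1, Nat.succ_pos _, by
    rw [ker_pow_eq_ker_pow_finrank_of_le (m := finrank K V + 1) (by omega),
      ker_pow_eq_ker_pow_finrank_of_le (m := finrank K V + 1 + 1) (by omega)]⟩⟩

theorem exists_pow_apply_eq_zero_of_isLeast_ker_pow_eq_ker_pow_succ {g : End K V} {k : ℕ}
    (hk : IsLeast {i | 0 < i ∧ LinearMap.ker (g ^ i) = LinearMap.ker (g ^ (i + 1))} k)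
    (hg : LinearMap.ker g ≠ ⊥) : ∃ v, (g ^ k) v = 0 ∧ (g ^ (k - 1)) v ≠ 0 := by
  have hk0 := hk.1.1
  have hne : LinearMap.ker (g ^ (k - 1)) ≠ LinearMap.ker (g ^ k) := by
    intro heq
    rcases Nat.eq_zero_or_pos (k - 1) with h0 | hpos
    · rw [h0, show k = 1 by omega, pow_zero, pow_one, one_eq_id, LinearMap.ker_id] at heq
      exact hg heq.symm
    · have := hk.2 ⟨hpos, by rwa [Nat.sub_add_cancel hk0]⟩
      omega
  exact SetLike.exists_of_lt ((ker_pow_mono g (Nat.sub_le k 1)).lt_of_ne hne)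

theorem exists_hasEigenvalue_ne_zero_of_not_isNilpotent [IsAlgClosed K] [FiniteDimensional K V]
    {f : End K V} (hf : ¬IsNilpotent f) : ∃ μ, f.HasEigenvalue μ ∧ μ ≠ 0 := by
  by_contra! h
  have htop : f.maxGenEigenspace 0 = ⊤ := by
    refine top_le_iff.1 ((iSup_maxGenEigenspace_eq_top f).symm.le.trans (iSup_le fun μ => ?_))
    by_cases hμ : μ = 0
    · rw [hμ]
    · intro v hv
      obtain rfl : v = 0 :=
        by_contra fun hv0 => hμ (h μ (hasEigenvalue_of_mem_maxGenEigenspace hv hv0))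
      exact Submodule.zero_mem _
  rw [maxGenEigenspace_eq_genEigenspace_finrank, genEigenspace_nat, zero_smul, sub_zero,
    LinearMap.ker_eq_top] at htop
  exact hf ⟨_, htop⟩

end VectorSpace

end Module.End

theorem Nat.pow_le_two_pow_mul_factorial_mul_choose {m n : ℕ} (h : 2 * m ≤ n) :
    (n : ℝ) ^ m ≤ 2 ^ m * m.factorial * n.choose m := by
  have hsub : (n : ℝ) ≤ 2 * ((n + 1 - m : ℕ) : ℝ) := by
    have : (2 * m : ℝ) ≤ n := by exact_mod_cast h
    rw [Nat.cast_sub (by omega)]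
    push_cast
    linarith
  have hfac : (0 : ℝ) < m.factorial := by exact_mod_cast m.factorial_pos
  calc (n : ℝ) ^ m ≤ (2 * ((n + 1 - m : ℕ) : ℝ)) ^ m := by gcongr
    _ = 2 ^ m * m.factorial * (((n + 1 - m : ℕ) : ℝ) ^ m / m.factorial) := by
      field_simp
      ring
    _ ≤ 2 ^ m * m.factorial * n.choose m := by
      gcongr
      exact Nat.pow_le_choose m n

theorem isBigO_natCast_pow_mul_of_le {a b : ℕ} (hab : a ≤ b) (s : ℝ) :
    (fun n : ℕ => (n : ℝ) ^ a * s ^ n) =O[atTop] fun n => (n : ℝ) ^ b * s ^ n := by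
  refine IsBigO.mul (IsBigO.of_bound 1 ?_) (isBigO_refl _ _)
  filter_upwards [eventually_ge_atTop 1] with n hn
  rw [one_mul, Real.norm_of_nonneg (by positivity), Real.norm_of_nonneg (by positivity)]
  exact pow_le_pow_right₀ (by exact_mod_cast hn) hab

theorem isLittleO_natCast_pow_mul_of_lt {a b : ℕ} (hab : a < b) (s : ℝ) :
    (fun n : ℕ => (n : ℝ) ^ a * s ^ n) =o[atTop] fun n => (n : ℝ) ^ b * s ^ n :=
  ((isLittleO_pow_pow_atTop_of_lt hab).comp_tendsto tendsto_natCast_atTop_atTop).mul_isBigO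
    (isBigO_refl _ _)

theorem isLittleO_natCast_pow_mul_pow_of_lt {s ρ : ℝ} (hs : 0 ≤ s) (hsρ : s < ρ)
    (a b : ℕ) :
    (fun n : ℕ => (n : ℝ) ^ a * s ^ n) =o[atTop] fun n => (n : ℝ) ^ b * ρ ^ n :=
  (isLittleO_pow_const_mul_const_pow_const_pow_of_norm_lt a
    (by rwa [Real.norm_of_nonneg hs])).trans_isBigO
    (by simpa using isBigO_natCast_pow_mul_of_le (Nat.zero_le b) ρ)

section BinomialTerms

variable {𝕜 E : Type*} [RCLike 𝕜] [NormedAddCommGroup E] [NormedSpace 𝕜 E]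

-- `pow_sub_of_lt` needs no `μ ≠ 0`: for `μ = 0` both sides vanish, as `0⁻¹ = 0`.
theorem isBigO_choose_mul_pow_smul (μ : 𝕜) (m : ℕ) (w : E) :
    (fun n : ℕ => ((n.choose m : 𝕜) * μ ^ (n - m)) • w) =O[atTop]
      fun n => (n : ℝ) ^ m * ‖μ‖ ^ n := by
  refine IsBigO.of_bound ((‖μ‖ ^ m)⁻¹ * ‖w‖) ?_
  filter_upwards [eventually_gt_atTop m] with n hn
  rw [norm_smul, norm_mul, RCLike.norm_natCast, norm_pow, pow_sub_of_lt _ hn,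
    Real.norm_of_nonneg (by positivity)]
  calc (n.choose m : ℝ) * (‖μ‖ ^ n * (‖μ‖ ^ m)⁻¹) * ‖w‖
      ≤ (n : ℝ) ^ m * (‖μ‖ ^ n * (‖μ‖ ^ m)⁻¹) * ‖w‖ := by
        gcongr
        exact_mod_cast Nat.choose_le_pow n m
    _ = (‖μ‖ ^ m)⁻¹ * ‖w‖ * ((n : ℝ) ^ m * ‖μ‖ ^ n) := by ring

theorem isBigO_natCast_pow_mul_pow_choose_mul_pow_smul (μ : 𝕜) {w : E} (hw : w ≠ 0)
    (m : ℕ) :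
    (fun n : ℕ => (n : ℝ) ^ m * ‖μ‖ ^ n) =O[atTop]
      fun n => ((n.choose m : 𝕜) * μ ^ (n - m)) • w := by
  have hw' : 0 < ‖w‖ := norm_pos_iff.2 hw
  refine IsBigO.of_bound (2 ^ m * m.factorial * ‖μ‖ ^ m / ‖w‖) ?_
  filter_upwards [eventually_ge_atTop (2 * m)] with n hn
  rw [Real.norm_of_nonneg (by positivity), norm_smul, norm_mul, RCLike.norm_natCast, norm_pow]
  have hsplit : ‖μ‖ ^ n = ‖μ‖ ^ (n - m) * ‖μ‖ ^ m := by
    rw [← pow_add, Nat.sub_add_cancel (by omega)]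
  calc (n : ℝ) ^ m * ‖μ‖ ^ n
      ≤ 2 ^ m * m.factorial * n.choose m * (‖μ‖ ^ (n - m) * ‖μ‖ ^ m) := by
        rw [hsplit]
        gcongr
        exact Nat.pow_le_two_pow_mul_factorial_mul_choose hn
    _ = 2 ^ m * m.factorial * ‖μ‖ ^ m / ‖w‖ *
          ((n.choose m : ℝ) * ‖μ‖ ^ (n - m) * ‖w‖) := by
        field_simp

end BinomialTerms

namespace Module.End

variable {𝕜 E : Type*} [RCLike 𝕜] [NormedAddCommGroup E] [NormedSpace 𝕜 E]

theorem isBigO_pow_apply_of_pow_sub_smul_apply_eq_zero (f : End 𝕜 E) {μ : 𝕜} {v : E}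
    {t : ℕ} (hv : ((f - μ • 1) ^ t) v = 0) :
    (fun n : ℕ => (f ^ n) v) =O[atTop] fun n => (n : ℝ) ^ (t - 1) * ‖μ‖ ^ n := by
  refine IsBigO.congr' ?_ (eventually_ge_atTop t |>.mono fun n hn =>
    (pow_apply_eq_sum_choose_smul f μ hv hn).symm) EventuallyEq.rfl
  refine IsBigO.fun_sum fun m hm => (isBigO_choose_mul_pow_smul μ m _).trans ?_
  exact isBigO_natCast_pow_mul_of_le (Nat.le_sub_one_of_lt (Finset.mem_range.1 hm)) _

theorem isBigO_pow_apply_of_pow_sub_smul_apply_ne_zero (f : End 𝕜 E) {μ : 𝕜} {v : E} {K : ℕ} (hv : ((f - μ • 1) ^ (K + 1)) v = 0) (hK : ((f - μ • 1) ^ K) v ≠ 0) :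
    (fun n : ℕ => (n : ℝ) ^ K * ‖μ‖ ^ n) =O[atTop] fun n : ℕ => (f ^ n) v := by
  set term : ℕ → ℕ → E :=
    fun m n => ((n.choose m : 𝕜) * μ ^ (n - m)) • ((f - μ • 1) ^ m) v
  have hexp : (fun n => (∑ m ∈ Finset.range K, term m n) + term K n) =ᶠ[atTop]
      fun n : ℕ => (f ^ n) v := by
    filter_upwards [eventually_ge_atTop (K + 1)] with n hn
    rw [pow_apply_eq_sum_choose_smul f μ hv hn, Finset.sum_range_succ]
  -- the top binomial term has exact order `n ^ K * ‖μ‖ ^ n` and dominates the others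
  have hlead := isBigO_natCast_pow_mul_pow_choose_mul_pow_smul μ hK K
  have hrest : (fun n => ∑ m ∈ Finset.range K, term m n) =o[atTop] term K :=
    IsLittleO.fun_sum fun m hm => ((isBigO_choose_mul_pow_smul μ m _).trans_isLittleO
      (isLittleO_natCast_pow_mul_of_lt (Finset.mem_range.1 hm) _)).trans_isBigO hlead
  exact hlead.trans (hrest.right_isBigO_add.trans_eventuallyEq hexp)

theorem isBigO_pow_apply [IsAlgClosed 𝕜] [FiniteDimensional 𝕜 E] (f : End 𝕜 E) {ρ : ℝ}
    {k : ℕ}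
    (hspec : ∀ μ, f.HasEigenvalue μ → ‖μ‖ ≤ ρ)
    (hk : ∀ μ, f.HasEigenvalue μ → ‖μ‖ = ρ →
      f.maxGenEigenspace μ ≤ LinearMap.ker ((f - μ • 1) ^ k)) (v : E) :
    (fun n : ℕ => (f ^ n) v) =O[atTop] fun n => (n : ℝ) ^ (k - 1) * ρ ^ n := by
  have hv : v ∈ ⨆ μ, f.maxGenEigenspace μ := by
    rw [iSup_maxGenEigenspace_eq_top]
    exact Submodule.mem_top
  refine Submodule.iSup_induction _
    (motive := fun v => (fun n : ℕ => (f ^ n) v) =O[atTop] _) hv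
    (fun μ w hw => ?_) (by simpa only [map_zero] using isBigO_zero _ _)
    (fun a b ha hb => by simpa only [map_add] using ha.add hb)
  by_cases hw0 : w = 0
  · simpa only [hw0, map_zero] using isBigO_zero _ _
  have hμ := hasEigenvalue_of_mem_maxGenEigenspace hw hw0
  rcases (hspec μ hμ).eq_or_lt with heq | hlt
  · simpa only [← heq] using isBigO_pow_apply_of_pow_sub_smul_apply_eq_zero f (hk μ hμ heq hw)
  · obtain ⟨N, hN⟩ := (mem_maxGenEigenspace f μ w).1 hw
    exact (isBigO_pow_apply_of_pow_sub_smul_apply_eq_zero f hN).trans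
      (isLittleO_natCast_pow_mul_pow_of_lt (norm_nonneg μ) hlt _ _).isBigO

theorem isBigO_pow_apply_and_exists_isBigO_pow_apply [IsAlgClosed 𝕜] [FiniteDimensional 𝕜 E]
    (f : End 𝕜 E) {ρ : ℝ} {k : ℕ}
    (hspec : ∀ μ, f.HasEigenvalue μ → ‖μ‖ ≤ ρ)
    (hk : IsGreatest {j | ∃ μ, f.HasEigenvalue μ ∧ ‖μ‖ = ρ ∧
      IsLeast {i | 0 < i ∧ LinearMap.ker ((f - μ • 1) ^ i) =
        LinearMap.ker ((f - μ • 1) ^ (i + 1))} j} k) :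
    (∀ v, (fun n : ℕ => (f ^ n) v) =O[atTop] fun n => (n : ℝ) ^ (k - 1) * ρ ^ n) ∧
      ∃ v, (fun n : ℕ => (n : ℝ) ^ (k - 1) * ρ ^ n) =O[atTop] fun n : ℕ => (f ^ n) v := by
  obtain ⟨⟨lam, hlam, hnorm, hleast⟩, hmax⟩ := hk
  refine ⟨isBigO_pow_apply f hspec fun μ hμ hμρ w hw => ?_, ?_⟩
  · obtain ⟨j, hj⟩ := exists_isLeast_ker_pow_eq_ker_pow_succ (f - μ • 1)
    obtain ⟨N, hN⟩ := (mem_maxGenEigenspace f μ w).1 hw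
    exact ker_pow_le_ker_pow_of_ker_pow_eq_ker_pow_succ hj.1.2 (hmax ⟨μ, hμ, hμρ, hj⟩) N hN
  · obtain ⟨v, hv, hv'⟩ :=
      exists_pow_apply_eq_zero_of_isLeast_ker_pow_eq_ker_pow_succ hleast
        (by rwa [← eigenspace_def])
    refine ⟨v, ?_⟩
    rw [← hnorm]
    exact isBigO_pow_apply_of_pow_sub_smul_apply_ne_zero f
      (by rwa [Nat.sub_add_cancel hleast.1.1]) hv'

end Module.End

namespace Matrix

variable {α m n R : Type*} [Fintype m] [Fintype n] [SeminormedRing R] {l : Filter α}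

theorem norm_mulVec_le_sum_norm_mul (M : Matrix m n R) (v : n → R) :
    ‖M *ᵥ v‖ ≤ (∑ i, ∑ j, ‖M i j‖) * ‖v‖ := by
  refine (pi_norm_le_iff_of_nonneg (by positivity)).2 fun i => ?_
  calc ‖(M *ᵥ v) i‖ ≤ ∑ j, ‖M i j‖ * ‖v‖ :=
        (norm_sum_le _ _).trans (Finset.sum_le_sum fun j _ =>
          (norm_mul_le _ _).trans (by gcongr; exact norm_le_pi_norm v j))
    _ ≤ (∑ i, ∑ j, ‖M i j‖) * ‖v‖ := by
        rw [← Finset.sum_mul]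
        gcongr
        exact Finset.single_le_sum (f := fun i => ∑ j, ‖M i j‖) (fun _ _ => by positivity)
          (Finset.mem_univ i)

theorem sum_norm_mul_le {p : Type*} [Fintype p] (M : Matrix m n R) (N : Matrix n p R) :
    ∑ i, ∑ k, ‖(M * N) i k‖ ≤ (∑ i, ∑ j, ‖M i j‖) * ∑ j, ∑ k, ‖N j k‖ :=
  calc ∑ i, ∑ k, ‖(M * N) i k‖ ≤ ∑ i, ∑ k, ∑ j, ‖M i j‖ * ‖N j k‖ := by
        gcongr with i _ k _
        exact (norm_sum_le _ _).trans (Finset.sum_le_sum fun j _ => norm_mul_le _ _)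
    _ = ∑ i, ∑ j, ‖M i j‖ * ∑ k, ‖N j k‖ := by
        simp_rw [Finset.mul_sum]
        exact Finset.sum_congr rfl fun i _ => Finset.sum_comm
    _ ≤ ∑ i, ∑ j, ‖M i j‖ * ∑ j, ∑ k, ‖N j k‖ := by
        gcongr with i _ j _
        exact Finset.single_le_sum (f := fun j => ∑ k, ‖N j k‖) (fun _ _ => by positivity)
          (Finset.mem_univ j)
    _ = (∑ i, ∑ j, ‖M i j‖) * ∑ j, ∑ k, ‖N j k‖ := by simp_rw [Finset.sum_mul]

theorem isTheta_sum_norm_mul_left [DecidableEq m] {M : α → Matrix m n R} {X : Matrix m m R}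
    (hX : IsUnit X) :
    (fun x => ∑ i, ∑ j, ‖(X * M x) i j‖) =Θ[l] fun x => ∑ i, ∑ j, ‖M x i j‖ := by
  obtain ⟨Y, hY⟩ := hX.exists_left_inv
  refine ⟨IsBigO.of_bound (∑ i, ∑ j, ‖X i j‖) (Eventually.of_forall fun x => ?_),
    IsBigO.of_bound (∑ i, ∑ j, ‖Y i j‖) (Eventually.of_forall fun x => ?_)⟩
  · rw [Real.norm_of_nonneg (by positivity), Real.norm_of_nonneg (by positivity)]
    exact sum_norm_mul_le X (M x)
  · rw [Real.norm_of_nonneg (by positivity), Real.norm_of_nonneg (by positivity)]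
    simpa only [← Matrix.mul_assoc, hY, Matrix.one_mul] using sum_norm_mul_le Y (X * M x)

theorem isTheta_sum_norm_of_isBigO_mulVec [DecidableEq n] {M : α → Matrix m n R} {g : α → ℝ}
    (hup : ∀ v, (fun x => M x *ᵥ v) =O[l] g) (hlow : ∃ v, g =O[l] fun x => M x *ᵥ v) :
    (fun x => ∑ i, ∑ j, ‖M x i j‖) =Θ[l] g := by
  refine ⟨IsBigO.fun_sum fun i _ => IsBigO.fun_sum fun j _ => ?_, ?_⟩
  · simpa only [mulVec_single_one, col_apply] using (isBigO_pi.1 (hup (Pi.single j 1)) i).norm_left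
  · obtain ⟨v, hv⟩ := hlow
    refine hv.trans (IsBigO.of_bound ‖v‖ (Eventually.of_forall fun x => ?_))
    rw [Real.norm_of_nonneg (by positivity), mul_comm]
    exact norm_mulVec_le_sum_norm_mul (M x) v

end Matrix

theorem isBigO_log_abs_div_of_isTheta {α : Type*} {l : Filter α} {u g : α → ℝ}
    (hu : u =Θ[l] g) : (fun x => Real.log (|u x| / |g x|)) =O[l] fun _ => (1 : ℝ) := by
  obtain ⟨C, -, hC⟩ := hu.1.exists_pos
  obtain ⟨c, hc, hc'⟩ := hu.2.exists_pos
  refine IsBigO.of_bound (max |Real.log c| |Real.log C|) ?_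
  filter_upwards [hC.bound, hc'.bound] with x hCx hcx
  simp only [Real.norm_eq_abs] at hCx hcx
  rw [norm_one, mul_one, Real.norm_eq_abs]
  rcases (abs_nonneg (g x)).eq_or_lt with hg | hg
  · simp [← hg]
  have hu : 0 < |u x| := pos_of_mul_pos_right (hg.trans_le hcx) hc.le
  refine abs_le.2 ⟨?_, ?_⟩
  · calc -max |Real.log c| |Real.log C| ≤ -Real.log c :=
          neg_le_neg ((le_abs_self _).trans (le_max_left _ _))
      _ = Real.log c⁻¹ := (Real.log_inv c).symm
      _ ≤ _ := Real.log_le_log (inv_pos.2 hc)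
          ((le_div_iff₀ hg).2 ((inv_mul_le_iff₀ hc).2 hcx))
  · calc Real.log (|u x| / |g x|) ≤ Real.log C :=
          Real.log_le_log (div_pos hu hg) ((div_le_iff₀ hg).2 hCx)
      _ ≤ _ := (le_abs_self _).trans (le_max_right _ _)

theorem tendsto_log_sub_div_log_of_isTheta {u : ℕ → ℝ} {ρ : ℝ} (hρ : 0 < ρ) {p : ℕ}
    (hu : u =Θ[atTop] fun n => (n : ℝ) ^ p * ρ ^ n) :
    Tendsto (fun n => (Real.log (u n) - n * Real.log ρ) / Real.log n) atTop (𝓝 p) := by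
  have hlog : Tendsto (fun n : ℕ => Real.log n) atTop atTop :=
    Real.tendsto_log_atTop.comp tendsto_natCast_atTop_atTop
  have hrem := ((isBigO_log_abs_div_of_isTheta hu).trans_isLittleO ((isLittleO_one_left_iff ℝ).2
    (tendsto_norm_atTop_atTop.comp hlog))).tendsto_div_nhds_zero
  have hlim : Tendsto (fun n => (p : ℝ) +
      Real.log (|u n| / |(n : ℝ) ^ p * ρ ^ n|) / Real.log n) atTop (𝓝 p) := by
    simpa using (tendsto_const_nhds (x := (p : ℝ))).add hrem
  refine hlim.congr' ?_
  filter_upwards [hu.2.eq_zero_imp, eventually_gt_atTop 1] with n hu0 hn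
  have hn0 : (0 : ℝ) < n := by exact_mod_cast Nat.zero_lt_of_lt hn
  have hg : 0 < (n : ℝ) ^ p * ρ ^ n := by positivity
  have hun : u n ≠ 0 := fun h => hg.ne' (hu0 h)
  have hlogn : 0 < Real.log n := Real.log_pos (by exact_mod_cast hn)
  rw [abs_of_pos hg, Real.log_div (abs_ne_zero.2 hun) hg.ne', Real.log_abs,
    Real.log_mul (by positivity) (by positivity), Real.log_pow, Real.log_pow]
  field_simp
  ring

theorem Matrix.hasEigenvalue_toLin'_map_iff {ι R S : Type*} [Fintype ι] [DecidableEq ι]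
    [CommRing R] [CommRing S] [IsDomain S] (F : Matrix ι ι R) (φ : R →+* S) (μ : S) :
    Module.End.HasEigenvalue (toLin' (F.map φ)) μ ↔ (F.charpoly.map φ).IsRoot μ := by
  rw [Module.End.hasEigenvalue_iff_isRoot_charpoly, charpoly_toLin', charpoly_map]

theorem Matrix.mulVecLin_sub_smul_one_pow {ι R : Type*} [Fintype ι] [DecidableEq ι] [CommRing R]
    (A : Matrix ι ι R) (μ : R) (i : ℕ) :
    ((A - μ • 1) ^ i).mulVecLin = (toLin' A - μ • 1) ^ i := by
  rw [← toLin'_apply', toLin'_pow, map_sub, map_smul, toLin'_one]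
  rfl

theorem norm_le_specRadM {r : ℕ} {F : Matrix (Fin r) (Fin r) ℝ} {μ : ℂ}
    (hμ : (F.charpoly.map (algebraMap ℝ ℂ)).IsRoot μ) : ‖μ‖ ≤ specRadM F := by
  have hne : F.charpoly.map (algebraMap ℝ ℂ) ≠ 0 := (F.charpoly_monic.map _).ne_zero
  exact_mod_cast Multiset.le_sup
    (Multiset.mem_map_of_mem (fun z => ‖z‖₊) ((Polynomial.mem_roots hne).2 hμ))

theorem specRadM_pos {r : ℕ} {F : Matrix (Fin r) (Fin r) ℝ} (hF : ¬IsNilpotent F) :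
    0 < specRadM F := by
  have hf : ¬IsNilpotent (Matrix.toLin' (F.map (algebraMap ℝ ℂ))) := by
    rintro ⟨n, hn⟩
    rw [← Matrix.toLin'_pow, LinearEquiv.map_eq_zero_iff, ← Matrix.map_pow] at hn
    exact hF ⟨n, Matrix.map_injective (FaithfulSMul.algebraMap_injective ℝ ℂ)
      (by simpa using hn)⟩
  obtain ⟨μ, hμ, hμ0⟩ := Module.End.exists_hasEigenvalue_ne_zero_of_not_isNilpotent hf
  exact (norm_pos_iff.2 hμ0).trans_le
    (norm_le_specRadM ((Matrix.hasEigenvalue_toLin'_map_iff _ _ _).1 hμ))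

theorem limsup_log_l1norm_mul_pow_div_log_eq_polynomialGrowthRate_general
    {r : ℕ} (X F : Matrix (Fin r) (Fin r) ℝ)
    (hX : IsUnit X) (hF : ¬ IsNilpotent F) (k : ℕ)
    (hk : IsGreatest {j : ℕ | ∃ lam : ℂ,
        (F.charpoly.map (algebraMap ℝ ℂ)).IsRoot lam ∧ ‖lam‖ = specRadM F ∧
        IsLeast {i : ℕ | 0 < i ∧
          LinearMap.ker
              (Matrix.mulVecLin ((F.map (algebraMap ℝ ℂ) - lam • 1) ^ i)) =
            LinearMap.ker
              (Matrix.mulVecLin ((F.map (algebraMap ℝ ℂ) - lam • 1) ^ (i + 1)))} j} k) :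
    Filter.limsup
      (fun n : ℕ =>
        (Real.log (∑ i : Fin r, ∑ j : Fin r, |(X * F ^ n) i j|) -
            n * Real.log (specRadM F)) / Real.log n)
      Filter.atTop = (k : ℝ) - 1 := by
  set A := F.map (algebraMap ℝ ℂ)
  have hρ := specRadM_pos hF
  obtain ⟨_, -, -, hleast⟩ := hk.1
  simp only [← Matrix.hasEigenvalue_toLin'_map_iff, Matrix.mulVecLin_sub_smul_one_pow] at hk
  obtain ⟨hup, v, hlow⟩ := Module.End.isBigO_pow_apply_and_exists_isBigO_pow_apply
    (Matrix.toLin' A)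
    (fun μ hμ => norm_le_specRadM ((Matrix.hasEigenvalue_toLin'_map_iff _ _ _).1 hμ)) hk
  have hA : (fun n => ∑ i, ∑ j, ‖(A ^ n) i j‖) =Θ[atTop]
      fun n : ℕ => (n : ℝ) ^ (k - 1) * specRadM F ^ n :=
    Matrix.isTheta_sum_norm_of_isBigO_mulVec
      (fun w => by simpa only [← Matrix.toLin'_pow, Matrix.toLin'_apply] using hup w)
      ⟨v, by simpa only [← Matrix.toLin'_pow, Matrix.toLin'_apply] using hlow⟩
  have hXF : (fun n => ∑ i, ∑ j, |(X * F ^ n) i j|) =Θ[atTop]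
      fun n : ℕ => (n : ℝ) ^ (k - 1) * specRadM F ^ n := by
    simp only [← Real.norm_eq_abs]
    refine (Matrix.isTheta_sum_norm_mul_left hX).trans ?_
    have hpow (n : ℕ) : A ^ n = (F ^ n).map (algebraMap ℝ ℂ) := (Matrix.map_pow F _ n).symm
    simpa only [hpow, Matrix.map_apply, Complex.coe_algebraMap, Complex.norm_real] using hA
  have hlim := tendsto_log_sub_div_log_of_isTheta hρ hXF
  rw [Nat.cast_sub hleast.1.1, Nat.cast_one] at hlim
  exact hlim.limsup_eq

/-- For `X` invertible and `F` non-nilpotent,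
`limsup_n (log ‖X·F^n‖₁ - n·log ρ(F)) / log n = k - 1`, where `k` is the maximum,
over complex eigenvalues `λ` of `F` with `|λ| = ρ(F)`, of the least positive `j`
with `ker((F - λ·I)^j) = ker((F - λ·I)^{j+1})` (for `F` regarded as a complex
matrix). -/
theorem limsup_log_l1norm_mul_pow_div_log_eq_polynomialGrowthRate
    {r : ℕ} (hr : 1 ≤ r) (X F : Matrix (Fin r) (Fin r) ℝ)
    (hX : IsUnit X) (hF : ¬ IsNilpotent F) (k : ℕ)
    (hk : IsGreatest {j : ℕ | ∃ lam : ℂ,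
        (F.charpoly.map (algebraMap ℝ ℂ)).IsRoot lam ∧ ‖lam‖ = specRadM F ∧
        IsLeast {i : ℕ | 0 < i ∧
          LinearMap.ker
              (Matrix.mulVecLin ((F.map (algebraMap ℝ ℂ) - lam • 1) ^ i)) =
            LinearMap.ker
              (Matrix.mulVecLin ((F.map (algebraMap ℝ ℂ) - lam • 1) ^ (i + 1)))} j} k) :
    Filter.limsup
      (fun n : ℕ =>
        (Real.log (∑ i : Fin r, ∑ j : Fin r, |(X * F ^ n) i j|) -
            n * Real.log (specRadM F)) / Real.log n)
      Filter.atTop = (k : ℝ) - 1 :=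
  limsup_log_l1norm_mul_pow_div_log_eq_polynomialGrowthRate_general X F hX hF k hk
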